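/- For a k-fold MDS code M ⊆ Σ^n with |Σ| = N, the complement Σ^n \ M is splittable (a disjoint union of N − k distance-2 MDS codes) if and only if the partial n-ary quasigroup corresponding to M is extendable to an n-ary quasigroup. -/

import Mathlib

def IsQuasigroup {α : Type*} {n : ℕ} (f : (Fin n → α) → α) : Prop :=
  ∀ (i : Fin n) (x : Fin n → α),
    Function.Bijective fun a => f (Function.update x i a)

def IsMDS {α : Type*} [Fintype α] [DecidableEq α] {m : ℕ}
    (M : Finset (Fin m → α)) : Prop :=
  M.card = Fintype.card α ^ (m - 1) ∧
    ∀ x ∈ M, ∀ y ∈ M, x ≠ y → 2 ≤ hammingDist x y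

def IsKFoldMDS {α : Type*} [Fintype α] [DecidableEq α] {n : ℕ} (k : ℕ)
    (M : Finset (Fin n → α)) : Prop :=
  ∀ (i : Fin n) (x : Fin n → α),
    (M.filter fun y => ∀ j, j ≠ i → y j = x j).card = k

/-- `M` is splittable: a disjoint union of `k` distance-2 MDS codes. -/
def Splittable {α : Type*} [Fintype α] [DecidableEq α] {m : ℕ} (k : ℕ)
    (M : Finset (Fin m → α)) : Prop :=
  ∃ c : Fin k → Finset (Fin m → α), (∀ i, IsMDS (c i)) ∧
    (∀ i j, i ≠ j → Disjoint (c i) (c j)) ∧ Finset.univ.biUnion c = M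

/-- Partial `(n+1)`-ary quasigroup on `α^n × S` (last coordinate in `S`). -/
def IsPartialQG {α : Type*} [Fintype α] [DecidableEq α] {n : ℕ} (S : Finset α)
    (g : (Fin (n + 1) → α) → α) : Prop :=
  ∀ x y : Fin (n + 1) → α, x (Fin.last n) ∈ S → y (Fin.last n) ∈ S →
    hammingDist x y = 1 → g x ≠ g y

/-- The union of the graphs of the layers `g(·, s)`, `s ∈ S`. -/
def layerGraphs {α : Type*} [Fintype α] [DecidableEq α] {n : ℕ} (S : Finset α)
    (g : (Fin (n + 1) → α) → α) : Finset (Fin (n + 1) → α) :=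
  (Finset.univ ×ˢ S).image fun p : (Fin n → α) × α =>
    Fin.snoc p.1 (g (Fin.snoc p.1 p.2))

/-- `g` (defined on `α^n × S`) extends to a full `(n+1)`-ary quasigroup. -/
def Extendable {α : Type*} [Fintype α] [DecidableEq α] {n : ℕ} (S : Finset α)
    (g : (Fin (n + 1) → α) → α) : Prop :=
  ∃ q : (Fin (n + 1) → α) → α, IsQuasigroup q ∧
    ∀ x : Fin (n + 1) → α, x (Fin.last n) ∈ S → q x = g x

private lemma hd_update {β : Type*} [DecidableEq β] {m : ℕ} (x : Fin m → β) (i : Fin m) (a : β)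
    (h : a ≠ x i) : hammingDist (Function.update x i a) x = 1 := by
  have hf : (Finset.univ.filter fun j => Function.update x i a j ≠ x j) = {i} := by
    ext j
    simp only [Finset.mem_filter, Finset.mem_univ, true_and, Finset.mem_singleton]
    constructor
    · intro hj; by_contra hji; exact hj (by rw [Function.update_of_ne hji])
    · rintro rfl; simpa using h
  show (Finset.univ.filter fun j => Function.update x i a j ≠ x j).card = 1
  rw [hf]; simp

private lemma hd_eq_one {β : Type*} [DecidableEq β] {m : ℕ} {x y : Fin m → β}
    (h : hammingDist x y = 1) : ∃ i, x i ≠ y i ∧ y = Function.update x i (y i) := by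
  have h' : (Finset.univ.filter fun j => x j ≠ y j).card = 1 := h
  obtain ⟨i, hi⟩ := Finset.card_eq_one.1 h'
  refine ⟨i, ?_, ?_⟩
  · have : i ∈ (Finset.univ.filter fun j => x j ≠ y j) := by rw [hi]; simp
    simpa using this
  · funext j
    by_cases hj : j = i
    · subst hj; simp
    · have : j ∉ (Finset.univ.filter fun t => x t ≠ y t) := by rw [hi]; simpa using hj
      simp only [Finset.mem_filter, Finset.mem_univ, true_and, not_not] at this
      rw [Function.update_of_ne hj]; exact this.symm

private lemma update_last_eq_snoc {β : Type*} {m : ℕ} (x : Fin (m + 1) → β) (a : β) :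
    Function.update x (Fin.last m) a = Fin.snoc (Fin.init x) a := by
  conv_lhs => rw [← Fin.snoc_init_self x]
  rw [Fin.update_snoc_last]

private lemma update_castSucc_eq_snoc {β : Type*} {m : ℕ} (x : Fin (m + 1) → β) (i : Fin m)
    (a : β) : Function.update x (Fin.castSucc i) a
      = Fin.snoc (Function.update (Fin.init x) i a) (x (Fin.last m)) := by
  conv_lhs => rw [← Fin.snoc_init_self x]
  rw [← Fin.snoc_update]

private lemma splittable_of_extendable {α : Type*} [Fintype α] [DecidableEq α]
    {n k : ℕ} (M : Finset (Fin (n + 1) → α))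
    (S : Finset α) (hS : S.card = k) (g : (Fin (n + 1) → α) → α)
    (hrep : layerGraphs S g = M) :
    Extendable S g → Splittable (Fintype.card α - k) Mᶜ := by
  classical
  rintro ⟨q, hq, hqg⟩
  have hT : Sᶜ.card = Fintype.card α - k := by rw [Finset.card_compl, hS]
  set C : α → Finset (Fin (n + 1) → α) :=
    fun a => Finset.univ.image fun x : Fin n → α => Fin.snoc x (q (Fin.snoc x a)) with hC
  have memC : ∀ (a : α) (z : Fin (n + 1) → α),
      z ∈ C a ↔ q (Fin.snoc (Fin.init z) a) = z (Fin.last n) := by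
    intro a z
    constructor
    · intro hz
      simp only [hC, Finset.mem_image, Finset.mem_univ, true_and] at hz
      obtain ⟨x, rfl⟩ := hz
      simp
    · intro h
      simp only [hC, Finset.mem_image, Finset.mem_univ, true_and]
      exact ⟨Fin.init z, by rw [h, Fin.snoc_init_self]⟩
  have uniqC : ∀ z a b, z ∈ C a → z ∈ C b → a = b := by
    intro z a b ha hb
    rw [memC] at ha hb
    apply (hq (Fin.last n) (Fin.snoc (Fin.init z) a)).1
    show q (Function.update _ _ a) = q (Function.update _ _ b)
    rw [Fin.update_snoc_last, Fin.update_snoc_last, ha, hb]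
  have existsC : ∀ z, ∃ a, z ∈ C a := by
    intro z
    obtain ⟨a, ha⟩ := (hq (Fin.last n) z).2 (z (Fin.last n))
    refine ⟨a, (memC a z).2 ?_⟩
    rw [← update_last_eq_snoc]
    exact ha
  have memM : ∀ z, z ∈ M ↔ ∃ a ∈ S, z ∈ C a := by
    intro z
    rw [← hrep]
    simp only [layerGraphs, Finset.mem_image, Finset.mem_product, Finset.mem_univ, true_and,
      Prod.exists]
    constructor
    · rintro ⟨x, s, hs, rfl⟩
      refine ⟨s, hs, (memC s _).2 ?_⟩
      rw [Fin.init_snoc, Fin.snoc_last]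
      exact hqg _ (by simpa using hs)
    · rintro ⟨a, ha, hz⟩
      rw [memC] at hz
      refine ⟨Fin.init z, a, ha, ?_⟩
      rw [hqg _ (by simpa using ha)] at hz
      rw [hz, Fin.snoc_init_self]
  have cardC : ∀ a, (C a).card = Fintype.card α ^ n := by
    intro a
    rw [hC]
    rw [Finset.card_image_of_injective _ (fun x y hxy => by
      have := congrArg Fin.init hxy; simpa using this)]
    simp [Finset.card_univ, Fintype.card_fun]
  have distC : ∀ a, ∀ z₁ ∈ C a, ∀ z₂ ∈ C a, z₁ ≠ z₂ → 2 ≤ hammingDist z₁ z₂ := by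
    intro a z₁ h₁ z₂ h₂ hne
    by_contra hlt
    push_neg at hlt
    have h01 : hammingDist z₁ z₂ = 1 := by
      have h0 : hammingDist z₁ z₂ ≠ 0 := fun h => hne (hammingDist_eq_zero.1 h)
      omega
    obtain ⟨i, hnei, hupd⟩ := hd_eq_one h01
    rw [memC] at h₁ h₂
    rcases Fin.eq_castSucc_or_eq_last i with ⟨i', rfl⟩ | rfl
    · have hlast : z₂ (Fin.last n) = z₁ (Fin.last n) := by
        rw [hupd, Function.update_of_ne (Fin.castSucc_lt_last i').ne']
      have hinit : Fin.init z₂ = Function.update (Fin.init z₁) i' (z₂ (Fin.castSucc i')) := by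
        conv_lhs => rw [hupd, update_castSucc_eq_snoc, Fin.init_snoc]
      have e1 : Fin.snoc (Fin.init z₂) a
          = Function.update (Fin.snoc (Fin.init z₁) a) (Fin.castSucc i')
            (z₂ (Fin.castSucc i')) := by
        rw [hinit, Fin.snoc_update]
      have heq : q (Function.update (Fin.snoc (Fin.init z₁) a) (Fin.castSucc i')
          (z₂ (Fin.castSucc i'))) = q (Function.update (Fin.snoc (Fin.init z₁) a)
          (Fin.castSucc i') ((Fin.snoc (Fin.init z₁) a) (Fin.castSucc i'))) := by
        rw [Function.update_eq_self, ← e1, h₂, h₁]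
        exact hlast
      have hb := (hq (Fin.castSucc i') (Fin.snoc (Fin.init z₁) a)).1 heq
      rw [Fin.snoc_castSucc] at hb
      exact hnei hb.symm
    · have hinit : Fin.init z₂ = Fin.init z₁ := by
        rw [hupd, update_last_eq_snoc, Fin.init_snoc]
      exact hnei (by rw [← h₁, ← h₂, hinit])
  refine ⟨fun i => C ((Sᶜ.equivFin.symm (Fin.cast hT.symm i)) : α), ?_, ?_, ?_⟩
  · intro i
    exact ⟨by simpa using cardC _, distC _⟩
  · intro i j hij
    rw [Finset.disjoint_left]
    intro z hzi hzj
    apply hij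
    have := uniqC z _ _ hzi hzj
    have h2 := Sᶜ.equivFin.symm.injective (Subtype.coe_injective this)
    simpa using h2
  · ext z
    simp only [Finset.mem_biUnion, Finset.mem_univ, true_and, Finset.mem_compl]
    constructor
    · rintro ⟨i, hzi⟩ hzM
      obtain ⟨a, haS, hza⟩ := (memM z).1 hzM
      have : a = ((Sᶜ.equivFin.symm (Fin.cast hT.symm i)) : α) := uniqC z _ _ hza hzi
      have hmem := (Sᶜ.equivFin.symm (Fin.cast hT.symm i)).2
      rw [← this] at hmem
      exact (Finset.mem_compl.1 hmem) haS
    · intro hzM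
      obtain ⟨a, hza⟩ := existsC z
      have haS : a ∉ S := fun h => hzM ((memM z).2 ⟨a, h, hza⟩)
      refine ⟨Fin.cast hT (Sᶜ.equivFin ⟨a, Finset.mem_compl.2 haS⟩), ?_⟩
      have : Sᶜ.equivFin.symm (Fin.cast hT.symm (Fin.cast hT (Sᶜ.equivFin
          ⟨a, Finset.mem_compl.2 haS⟩))) = ⟨a, Finset.mem_compl.2 haS⟩ := by
        simp
      rw [this]
      exact hza

private lemma extendable_of_splittable {α : Type*} [Fintype α] [DecidableEq α]
    {n k : ℕ} (M : Finset (Fin (n + 1) → α))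
    (S : Finset α) (hS : S.card = k) (g : (Fin (n + 1) → α) → α)
    (hg : IsPartialQG S g) (hrep : layerGraphs S g = M) :
    Splittable (Fintype.card α - k) Mᶜ → Extendable S g := by
  classical
  rintro ⟨c, hMDS, hdisj, hunion⟩
  have hT : Sᶜ.card = Fintype.card α - k := by rw [Finset.card_compl, hS]
  have hex : ∀ (i : Fin (Fintype.card α - k)) (x : Fin n → α),
      ∃ z, z ∈ c i ∧ Fin.init z = x := by
    intro i x
    have hinj : Set.InjOn (fun z : Fin (n + 1) → α => Fin.init z) (c i) := by
      intro z₁ h₁ z₂ h₂ hinit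
      by_contra hne
      have h2 := (hMDS i).2 z₁ h₁ z₂ h₂ hne
      have hinit' : Fin.init z₁ = Fin.init z₂ := hinit
      have hlne : z₂ (Fin.last n) ≠ z₁ (Fin.last n) := by
        intro hl
        apply hne
        rw [← Fin.snoc_init_self z₁, ← Fin.snoc_init_self z₂, hinit', hl]
      have hupd : z₂ = Function.update z₁ (Fin.last n) (z₂ (Fin.last n)) := by
        rw [update_last_eq_snoc, hinit', Fin.snoc_init_self]
      have : hammingDist z₁ z₂ = 1 := by
        rw [hammingDist_comm, hupd]
        exact hd_update _ _ _ hlne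
      omega
    have hcard : (Finset.image (fun z : Fin (n + 1) → α => Fin.init z) (c i)).card = Fintype.card (Fin n → α) := by
      rw [Finset.card_image_of_injOn hinj, (hMDS i).1]
      simp [Fintype.card_fun]
    have huniv : Finset.image (fun z : Fin (n + 1) → α => Fin.init z) (c i) = Finset.univ := Finset.eq_univ_of_card _ hcard
    have hx : x ∈ Finset.image (fun z : Fin (n + 1) → α => Fin.init z) (c i) := huniv ▸ Finset.mem_univ x
    simpa [Finset.mem_image] using hx
  choose w hw1 hw2 using hex
  have hwmem : ∀ i x, Fin.snoc x (w i x (Fin.last n)) ∈ c i := by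
    intro i x
    have h := hw2 i x
    have he : w i x = Fin.snoc x (w i x (Fin.last n)) := by
      conv_lhs => rw [← Fin.snoc_init_self (w i x)]
      rw [h]
    rw [← he]
    exact hw1 i x
  set J : {a // a ∈ Sᶜ} → Fin (Fintype.card α - k) :=
    fun a => Fin.cast hT (Sᶜ.equivFin a) with hJ
  have hJinj : Function.Injective J := fun a b hab =>
    Sᶜ.equivFin.injective (Fin.cast_injective _ hab)
  set q : (Fin (n + 1) → α) → α := fun x =>
    if h : x (Fin.last n) ∈ S then g x
    else w (J ⟨x (Fin.last n), Finset.mem_compl.2 h⟩) (Fin.init x) (Fin.last n) with hqdef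
  have q_in : ∀ x, x (Fin.last n) ∈ S → q x = g x := fun x h => dif_pos h
  have q_out : ∀ (y : Fin n → α) (a : α) (h : a ∉ S),
      q (Fin.snoc y a) = w (J ⟨a, Finset.mem_compl.2 h⟩) y (Fin.last n) := by
    intro y a h
    have hlast : (Fin.snoc y a : Fin (n + 1) → α) (Fin.last n) = a := by simp
    have h' : ¬ (Fin.snoc y a : Fin (n + 1) → α) (Fin.last n) ∈ S := by rw [hlast]; exact h
    have hqe : q (Fin.snoc y a) = w (J ⟨(Fin.snoc y a : Fin (n + 1) → α) (Fin.last n),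
        Finset.mem_compl.2 h'⟩) (Fin.init (Fin.snoc y a : Fin (n + 1) → α)) (Fin.last n) := by
      rw [hqdef]
      exact dif_neg h'
    rw [hqe, Fin.init_snoc]
    congr 2
    exact Subtype.ext hlast
  have key : ∀ (y : Fin n → α) (a : α) (h : a ∉ S),
      Fin.snoc y (q (Fin.snoc y a)) ∈ c (J ⟨a, Finset.mem_compl.2 h⟩) := by
    intro y a h
    rw [q_out y a h]
    exact hwmem _ y
  have csub : ∀ j, c j ⊆ Mᶜ := by
    intro j z hz
    rw [← hunion]
    exact Finset.mem_biUnion.2 ⟨j, Finset.mem_univ j, hz⟩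
  have keyM : ∀ (y : Fin n → α) (a : α), a ∈ S → Fin.snoc y (q (Fin.snoc y a)) ∈ M := by
    intro y a h
    rw [q_in _ (by simpa using h), ← hrep]
    simp only [layerGraphs, Finset.mem_image, Finset.mem_product, Finset.mem_univ, true_and,
      Prod.exists]
    exact ⟨y, a, h, rfl⟩
  refine ⟨q, ?_, q_in⟩
  intro i x
  rw [← Finite.injective_iff_bijective]
  rcases Fin.eq_castSucc_or_eq_last i with ⟨i', rfl⟩ | rfl
  · -- inner coordinate
    intro a₁ a₂ h12
    simp only [update_castSucc_eq_snoc] at h12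
    set s := x (Fin.last n) with hs
    set y₁ := Function.update (Fin.init x) i' a₁ with hy₁
    set y₂ := Function.update (Fin.init x) i' a₂ with hy₂
    by_contra hne
    have hy12 : y₁ = Function.update y₂ i' a₁ := by
      rw [hy₁, hy₂, Function.update_idem]
    have hy2i : y₂ i' = a₂ := Function.update_self _ _ _
    by_cases hsS : s ∈ S
    · apply hg (Fin.snoc y₁ s) (Fin.snoc y₂ s) (by simpa using hsS) (by simpa using hsS)
      · -- hammingDist = 1
        have : Fin.snoc y₁ s = Function.update (Fin.snoc y₂ s : Fin (n + 1) → α) (Fin.castSucc i') a₁ := by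
          rw [hy12, Fin.snoc_update]
        rw [this]
        apply hd_update
        rw [Fin.snoc_castSucc, hy2i]
        exact hne
      · rw [← q_in _ (by simpa using hsS), ← q_in _ (by simpa using hsS)]
        exact h12
    · rw [q_out y₁ s hsS, q_out y₂ s hsS] at h12
      set j := J ⟨s, Finset.mem_compl.2 hsS⟩ with hj
      have hm₁ : Fin.snoc y₁ (w j y₁ (Fin.last n)) ∈ c j := hwmem j y₁
      have hm₂ : Fin.snoc y₂ (w j y₂ (Fin.last n)) ∈ c j := hwmem j y₂
      rw [← h12] at hm₂
      have hwne : (Fin.snoc y₁ (w j y₁ (Fin.last n)) : Fin (n + 1) → α) ≠ Fin.snoc y₂ (w j y₁ (Fin.last n)) := by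
        intro hcontr
        apply hne
        have := congrArg (fun z => z (Fin.castSucc i')) hcontr
        simpa [hy₁, hy₂] using this
      have hdist := (hMDS j).2 _ hm₁ _ hm₂ hwne
      have hone : hammingDist (Fin.snoc y₁ (w j y₁ (Fin.last n)) : Fin (n + 1) → α)
          (Fin.snoc y₂ (w j y₁ (Fin.last n))) = 1 := by
        have : Fin.snoc y₁ (w j y₁ (Fin.last n))
            = Function.update (Fin.snoc y₂ (w j y₁ (Fin.last n)) : Fin (n + 1) → α) (Fin.castSucc i') a₁ := by
          rw [hy12, Fin.snoc_update]
        rw [this]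
        apply hd_update
        rw [Fin.snoc_castSucc, hy2i]
        exact hne
      omega
  · -- last coordinate
    intro a₁ a₂ h12
    simp only [update_last_eq_snoc] at h12
    set x' := Fin.init x with hx'
    by_cases h₁ : a₁ ∈ S <;> by_cases h₂ : a₂ ∈ S
    · by_contra hne
      apply hg (Fin.snoc x' a₁) (Fin.snoc x' a₂) (by simpa using h₁) (by simpa using h₂)
      · have : Fin.snoc x' a₁ = Function.update (Fin.snoc x' a₂ : Fin (n + 1) → α) (Fin.last n) a₁ := by
          rw [Fin.update_snoc_last]
        rw [this]
        apply hd_update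
        rw [Fin.snoc_last]
        exact hne
      · rw [← q_in _ (by simpa using h₁), ← q_in _ (by simpa using h₂)]
        exact h12
    · exfalso
      have hM1 : Fin.snoc x' (q (Fin.snoc x' a₁)) ∈ M := keyM x' a₁ h₁
      have hC2 : Fin.snoc x' (q (Fin.snoc x' a₂)) ∈ Mᶜ := csub _ (key x' a₂ h₂)
      rw [← h12] at hC2
      exact (Finset.mem_compl.1 hC2) hM1
    · exfalso
      have hM2 : Fin.snoc x' (q (Fin.snoc x' a₂)) ∈ M := keyM x' a₂ h₂
      have hC1 : Fin.snoc x' (q (Fin.snoc x' a₁)) ∈ Mᶜ := csub _ (key x' a₁ h₁)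
      rw [h12] at hC1
      exact (Finset.mem_compl.1 hC1) hM2
    · by_contra hne
      have hC1 := key x' a₁ h₁
      have hC2 := key x' a₂ h₂
      rw [h12] at hC1
      have hjne : J ⟨a₁, Finset.mem_compl.2 h₁⟩ ≠ J ⟨a₂, Finset.mem_compl.2 h₂⟩ := by
        intro hJeq
        exact hne (congrArg Subtype.val (hJinj hJeq))
      exact Finset.disjoint_left.1 (hdisj _ _ hjne) hC1 hC2

/-- For a `k`-fold MDS code `M`, the complement is splittable into `N - k`
distance-2 MDS codes iff the corresponding partial quasigroup is extendable. -/
theorem compl_splittable_iff_extendable {α : Type*} [Fintype α] [DecidableEq α]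
    {n k : ℕ} (M : Finset (Fin (n + 1) → α)) (hM : IsKFoldMDS k M)
    (S : Finset α) (hS : S.card = k) (g : (Fin (n + 1) → α) → α)
    (hg : IsPartialQG S g) (hrep : layerGraphs S g = M) :
    Splittable (Fintype.card α - k) Mᶜ ↔ Extendable S g :=
  ⟨extendable_of_splittable M S hS g hg hrep, splittable_of_extendable M S hS g hrep⟩
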